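/- For n ≥ 1 and pairwise distinct nonzero constants a_1,…,a_n, define on the 2n-dimensional phase space the functions K(s) = Σ_i (x^i)²/(1+s·a_i), L(s) = Σ_i s·a_i·p_i²/(1+s·a_i), M(s) = Σ_i p_i·x^i/(1+s·a_i), and H(s) = K(s)·L(s) + M(s)². Then for all parameters s, t (avoiding poles), the Poisson bracket {H(s), H(t)} = 0. -/

import Mathlib

/-
With `r_i(s) = 1/(1 + s a_i)`, the `i`-th term of `{H(s), H(t)}` carries the factor
`r_i(s) r_i(t)`. After multiplying by `s - t`, the resolvent identities
`(s - t) a_i r_i(s) r_i(t) = r_i(t) - r_i(s)` and `(s - t) r_i(s) r_i(t) = s r_i(s) - t r_i(t)`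
turn every term into differences of the summands of `K`, `L`, `M` at `s` and at `t`. Summing over
`i` expresses `(s - t) {H(s), H(t)}` as a polynomial in `K, L, M` at `s` and `t`, which vanishes
identically.
-/

open Finset

/-- Partial derivative in the `i`-th position coordinate. -/
noncomputable def pdX {n : ℕ} (i : Fin n)
    (f : (Fin n → ℝ) × (Fin n → ℝ) → ℝ) (z : (Fin n → ℝ) × (Fin n → ℝ)) : ℝ :=
  deriv (fun t => f (Function.update z.1 i t, z.2)) (z.1 i)

/-- Partial derivative in the `i`-th momentum coordinate. -/
noncomputable def pdP {n : ℕ} (i : Fin n)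
    (f : (Fin n → ℝ) × (Fin n → ℝ) → ℝ) (z : (Fin n → ℝ) × (Fin n → ℝ)) : ℝ :=
  deriv (fun t => f (z.1, Function.update z.2 i t)) (z.2 i)

/-- Canonical Poisson bracket `{f, g} = ∑ i, (∂f/∂p_i · ∂g/∂x^i − ∂f/∂x^i · ∂g/∂p_i)`. -/
noncomputable def pb {n : ℕ} (f g : (Fin n → ℝ) × (Fin n → ℝ) → ℝ)
    (z : (Fin n → ℝ) × (Fin n → ℝ)) : ℝ :=
  ∑ i, (pdP i f z * pdX i g z - pdX i f z * pdP i g z)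

/-- `K(s) = ∑ i (x^i)²/(1+s·a_i)`. -/
noncomputable def Kf {n : ℕ} (a : Fin n → ℝ) (s : ℝ)
    (z : (Fin n → ℝ) × (Fin n → ℝ)) : ℝ :=
  ∑ i, (z.1 i) ^ 2 / (1 + s * a i)

/-- `L(s) = ∑ i s·a_i·p_i²/(1+s·a_i)`. -/
noncomputable def Lf {n : ℕ} (a : Fin n → ℝ) (s : ℝ)
    (z : (Fin n → ℝ) × (Fin n → ℝ)) : ℝ :=
  ∑ i, s * a i * (z.2 i) ^ 2 / (1 + s * a i)

/-- `M(s) = ∑ i p_i·x^i/(1+s·a_i)`. -/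
noncomputable def Mf {n : ℕ} (a : Fin n → ℝ) (s : ℝ)
    (z : (Fin n → ℝ) × (Fin n → ℝ)) : ℝ :=
  ∑ i, z.2 i * z.1 i / (1 + s * a i)

/-- `H(s) = K(s)·L(s) + M(s)²`. -/
noncomputable def Hf {n : ℕ} (a : Fin n → ℝ) (s : ℝ)
    (z : (Fin n → ℝ) × (Fin n → ℝ)) : ℝ :=
  Kf a s z * Lf a s z + (Mf a s z) ^ 2

theorem hasDerivAt_sum_update {𝕜 F ι : Type*} [NontriviallyNormedField 𝕜] [NormedAddCommGroup F]
    [NormedSpace 𝕜 F] [Fintype ι] [DecidableEq ι] (g : ι → 𝕜) (i : ι) (h : ι → 𝕜 → F) {d : F}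
    (hd : HasDerivAt (h i) d (g i)) :
    HasDerivAt (fun u => ∑ j, h j (Function.update g i u j)) d (g i) := by
  have hsplit : (fun u => ∑ j, h j (Function.update g i u j))
      = fun u => h i u + ∑ j ∈ univ.erase i, h j (g j) := by
    funext u
    rw [← add_sum_erase _ _ (mem_univ i), Function.update_self]
    congr 1
    exact sum_congr rfl fun j hj => by rw [Function.update_of_ne (ne_of_mem_erase hj)]
  rw [hsplit]
  exact hd.add_const _

theorem pb_self {n : ℕ} (f : (Fin n → ℝ) × (Fin n → ℝ) → ℝ) (z : (Fin n → ℝ) × (Fin n → ℝ)) :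
    pb f f z = 0 :=
  sum_eq_zero fun _ _ => by ring

section Gradient

variable {n : ℕ} (a : Fin n → ℝ) (s : ℝ) (z : (Fin n → ℝ) × (Fin n → ℝ)) (i : Fin n)

theorem hasDerivAt_Kf_update_fst :
    HasDerivAt (fun u => Kf a s (Function.update z.1 i u, z.2))
      (2 * z.1 i / (1 + s * a i)) (z.1 i) :=
  hasDerivAt_sum_update z.1 i (fun j w => w ^ 2 / (1 + s * a j))
    (by simpa using (hasDerivAt_pow 2 (z.1 i)).div_const (1 + s * a i))

theorem hasDerivAt_Mf_update_fst :
    HasDerivAt (fun u => Mf a s (Function.update z.1 i u, z.2))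
      (z.2 i / (1 + s * a i)) (z.1 i) :=
  hasDerivAt_sum_update z.1 i (fun j w => z.2 j * w / (1 + s * a j))
    (by simpa using ((hasDerivAt_id (z.1 i)).const_mul (z.2 i)).div_const (1 + s * a i))

theorem hasDerivAt_Lf_update_snd :
    HasDerivAt (fun u => Lf a s (z.1, Function.update z.2 i u))
      (2 * s * a i * z.2 i / (1 + s * a i)) (z.2 i) :=
  hasDerivAt_sum_update z.2 i (fun j w => s * a j * w ^ 2 / (1 + s * a j))
    ((((hasDerivAt_pow 2 (z.2 i)).const_mul (s * a i)).div_const (1 + s * a i)).congr_deriv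
      (by ring))

theorem hasDerivAt_Mf_update_snd :
    HasDerivAt (fun u => Mf a s (z.1, Function.update z.2 i u))
      (z.1 i / (1 + s * a i)) (z.2 i) :=
  hasDerivAt_sum_update z.2 i (fun j w => w * z.1 j / (1 + s * a j))
    (by simpa using ((hasDerivAt_id (z.2 i)).mul_const (z.1 i)).div_const (1 + s * a i))

theorem pdX_Hf :
    pdX i (Hf a s) z = 2 * (z.1 i * Lf a s z + Mf a s z * z.2 i) / (1 + s * a i) := by
  have hL : HasDerivAt (fun u => Lf a s (Function.update z.1 i u, z.2)) 0 (z.1 i) :=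
    hasDerivAt_const _ (Lf a s z)
  have hH : HasDerivAt (fun u => Hf a s (Function.update z.1 i u, z.2)) _ (z.1 i) :=
    ((hasDerivAt_Kf_update_fst a s z i).mul hL).add
      ((hasDerivAt_Mf_update_fst a s z i).pow 2)
  rw [pdX, hH.deriv]
  simp only [Function.update_eq_self]
  ring

theorem pdP_Hf :
    pdP i (Hf a s) z
      = 2 * (s * a i * z.2 i * Kf a s z + Mf a s z * z.1 i) / (1 + s * a i) := by
  have hK : HasDerivAt (fun u => Kf a s (z.1, Function.update z.2 i u)) 0 (z.2 i) :=
    hasDerivAt_const _ (Kf a s z)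
  have hH : HasDerivAt (fun u => Hf a s (z.1, Function.update z.2 i u)) _ (z.2 i) :=
    (hK.mul (hasDerivAt_Lf_update_snd a s z i)).add
      ((hasDerivAt_Mf_update_snd a s z i).pow 2)
  rw [pdP, hH.deriv]
  simp only [Function.update_eq_self]
  ring

end Gradient

section Involution

variable {n : ℕ} (a : Fin n → ℝ) {s t : ℝ} (z : (Fin n → ℝ) × (Fin n → ℝ))

theorem sub_mul_pb_Hf_term (i : Fin n) (hs : 1 + s * a i ≠ 0) (ht : 1 + t * a i ≠ 0) :
    (s - t) * (pdP i (Hf a s) z * pdX i (Hf a t) z - pdX i (Hf a s) z * pdP i (Hf a t) z)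
      = 4 * ((s * Kf a s z * Lf a t z - t * Kf a t z * Lf a s z)
              * (z.2 i * z.1 i / (1 + t * a i) - z.2 i * z.1 i / (1 + s * a i))
          + (s * Kf a s z * Mf a t z - t * Kf a t z * Mf a s z)
              * (s * a i * z.2 i ^ 2 / (1 + s * a i) - t * a i * z.2 i ^ 2 / (1 + t * a i))
          + (Mf a s z * Lf a t z - Lf a s z * Mf a t z)
              * (s * (z.1 i ^ 2 / (1 + s * a i)) - t * (z.1 i ^ 2 / (1 + t * a i)))) := by
  rw [pdX_Hf, pdX_Hf, pdP_Hf, pdP_Hf]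
  field_simp
  ring

theorem sub_mul_pb_Hf (hs : ∀ i, 1 + s * a i ≠ 0) (ht : ∀ i, 1 + t * a i ≠ 0) :
    (s - t) * pb (Hf a s) (Hf a t) z
      = 4 * ((s * Kf a s z * Lf a t z - t * Kf a t z * Lf a s z) * (Mf a t z - Mf a s z)
          + (s * Kf a s z * Mf a t z - t * Kf a t z * Mf a s z) * (Lf a s z - Lf a t z)
          + (Mf a s z * Lf a t z - Lf a s z * Mf a t z) * (s * Kf a s z - t * Kf a t z)) := by
  rw [pb, mul_sum, sum_congr rfl fun i _ => sub_mul_pb_Hf_term a z i (hs i) (ht i), ← mul_sum]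
  simp only [sum_add_distrib, ← mul_sum, sum_sub_distrib]
  rfl

end Involution

theorem stmt1 {n : ℕ} (a : Fin n → ℝ)
    (s t : ℝ) (hs : ∀ i, 1 + s * a i ≠ 0) (ht : ∀ i, 1 + t * a i ≠ 0) :
    ∀ z : (Fin n → ℝ) × (Fin n → ℝ), pb (Hf a s) (Hf a t) z = 0 := by
  intro z
  rcases eq_or_ne s t with rfl | hst
  · exact pb_self _ z
  have hvanish : (s - t) * pb (Hf a s) (Hf a t) z = 0 := by
    rw [sub_mul_pb_Hf a z hs ht]
    ring
  exact (mul_eq_zero.mp hvanish).resolve_left (sub_ne_zero.mpr hst)
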